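/- arXiv:1107.2444 — 2 statements merged into one kernel-verified Lean document; each statement's English description precedes it below -/
import Mathlib

section
/- Let C_r denote the degree-r Chebyshev polynomial of the first kind. For every positive integer k and r = ⌈√k⌉, one has C_r(1 + 1/k) ≥ 2. -/
open Polynomial Polynomial.Chebyshev Real

lemma pow_eight_bound (e : ℝ) (hepos : 0 < e) (he16 : e ≤ 1/16) :
    (1+e)^8 ≤ 1 + 8*e + 32*e^2 := by
  have q2 : (0:ℝ) ≤ e^2 := by positivity
  have q3 : e^3 ≤ (1/16)*e^2 := by nlinarith
  have q4 : e^4 ≤ (1/16)*e^3 := by nlinarith [pow_nonneg hepos.le 3]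
  have q5 : e^5 ≤ (1/16)*e^4 := by nlinarith [pow_nonneg hepos.le 4]
  have q6 : e^6 ≤ (1/16)*e^5 := by nlinarith [pow_nonneg hepos.le 5]
  have q7 : e^7 ≤ (1/16)*e^6 := by nlinarith [pow_nonneg hepos.le 6]
  have q8 : e^8 ≤ (1/16)*e^7 := by nlinarith [pow_nonneg hepos.le 7]
  nlinarith [q3, q4, q5, q6, q7, q8, q2]

lemma final_ineq (y : ℝ) (hy0 : 0 < y) (hy : 2 + Real.sqrt 3 ≤ y) :
    2 ≤ (y + y⁻¹)/2 := by
  rw [le_div_iff₀ (by norm_num : (0:ℝ) < 2)]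
  have hs3 : Real.sqrt 3 ^ 2 = 3 := Real.sq_sqrt (by norm_num)
  have hs3n : 0 ≤ Real.sqrt 3 := Real.sqrt_nonneg _
  have hinv : y * y⁻¹ = 1 := mul_inv_cancel₀ hy0.ne'
  nlinarith [hy, hy0, hs3, hs3n, hinv, sq_nonneg (y - 2 - Real.sqrt 3)]

lemma exp_frac_le (e : ℝ) (hepos : 0 < e) : Real.exp (e/(1+e)) ≤ 1 + e := by
  have h1 : 1 - (1+e)⁻¹ ≤ Real.log (1+e) :=
    Real.one_sub_inv_le_log_of_pos (by linarith)
  have h2 : e/(1+e) = 1 - (1+e)⁻¹ := by field_simp; ring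
  calc Real.exp (e/(1+e)) ≤ Real.exp (Real.log (1+e)) := by
        apply Real.exp_le_exp.mpr; rw [h2]; exact h1
  _ = 1 + e := Real.exp_log (by linarith)

lemma T_real_cosh_aux (n : ℤ) (t : ℝ) :
    (Polynomial.Chebyshev.T ℝ n).eval (Real.cosh t) = Real.cosh (n * t) := by
  have h := Polynomial.Chebyshev.T_complex_cos (t * Complex.I) n
  rw [Complex.cos_mul_I] at h
  have h2 : (n : ℂ) * (t * Complex.I) = ((n : ℝ) * t : ℝ) * Complex.I := by push_cast; ring
  rw [h2, Complex.cos_mul_I] at h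
  have h3 := Polynomial.Chebyshev.complex_ofReal_eval_T (Real.cosh t) n
  rw [Complex.ofReal_cosh] at h3
  apply Complex.ofReal_injective
  rw [h3, h, Complex.ofReal_cosh]

lemma cosh_log_aux (x : ℝ) (hx : 1 ≤ x) :
    Real.cosh (Real.log (x + Real.sqrt (x^2 - 1))) = x := by
  set s := Real.sqrt (x^2 - 1) with hs
  have hs0 : 0 ≤ s := Real.sqrt_nonneg _
  have hssq : s^2 = x^2 - 1 := Real.sq_sqrt (by nlinarith)
  have hz : 0 < x + s := by nlinarith
  rw [Real.cosh_eq, Real.exp_log hz, Real.exp_neg, Real.exp_log hz]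
  field_simp
  nlinarith [hssq]

lemma log_two_add_sqrt_three_le : Real.log (2 + Real.sqrt 3) ≤ 1.33 := by
  rw [Real.log_le_iff_le_exp (by positivity)]
  have h3 : Real.sqrt 3 ≤ 1.7321 := by
    rw [show (1.7321:ℝ) = Real.sqrt (1.7321^2) by rw [Real.sqrt_sq]; norm_num]
    exact Real.sqrt_le_sqrt (by norm_num)
  have he : Real.exp 1.33 = Real.exp 1 * (Real.exp 0.04125)^8 := by
    rw [← Real.exp_nat_mul, ← Real.exp_add]; norm_num
  have h1 : (2.7182818283:ℝ) < Real.exp 1 := Real.exp_one_gt_d9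
  have h2 : (1.04125:ℝ) ≤ Real.exp 0.04125 := by
    have := Real.add_one_le_exp (0.04125:ℝ); linarith
  have hp : (1.04125:ℝ)^8 ≤ (Real.exp 0.04125)^8 :=
    pow_le_pow_left₀ (by norm_num) h2 8
  nlinarith [h3, h1, hp, Real.exp_pos (0.04125:ℝ)]

lemma ceil_sqrt_nat (k c : ℕ) (hc : 0 < c) (h1 : ((c:ℝ) - 1)^2 < k) (h2 : (k:ℝ) ≤ (c:ℝ)^2) :
    ⌈Real.sqrt k⌉₊ = c := by
  rw [Nat.ceil_eq_iff hc.ne']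
  constructor
  · have hlt : ((c:ℝ) - 1) < Real.sqrt k := by
      rcases le_or_gt ((c:ℝ) - 1) 0 with h | h
      · exact h.trans_lt (by
          have : (0:ℝ) < k := by nlinarith [sq_nonneg ((c:ℝ) - 1)]
          exact Real.sqrt_pos.mpr this)
      · exact (Real.lt_sqrt h.le).mpr h1
    have hcast : ((c - 1 : ℕ) : ℝ) = (c:ℝ) - 1 := by
      push_cast [Nat.cast_sub hc]; ring
    rw [hcast]; exact hlt
  · rw [show (c:ℝ) = Real.sqrt ((c:ℝ)^2) from (Real.sqrt_sq c.cast_nonneg).symm]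
    exact Real.sqrt_le_sqrt h2

lemma T_three_aux : Polynomial.Chebyshev.T ℝ 3 = 4 * Polynomial.X ^ 3 - 3 * Polynomial.X := by
  have h := Polynomial.Chebyshev.T_add_two ℝ 1
  norm_num at h
  rw [h, Polynomial.Chebyshev.T_two]
  ring

/-- For every positive integer `k`, the Chebyshev polynomial of the first kind of degree
`r = ⌈√k⌉` satisfies `C_r(1 + 1/k) ≥ 2`. -/
theorem chebyshev_eval_one_add_inv_ge_two (k : ℕ) (hk : 0 < k) :
    2 ≤ (Polynomial.Chebyshev.T ℝ (⌈Real.sqrt k⌉₊ : ℤ)).eval (1 + 1 / (k : ℝ)) := by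
  rcases lt_or_ge k 8 with h8 | h8
  · interval_cases k
    · rw [ceil_sqrt_nat 1 1 (by norm_num) (by norm_num) (by norm_num)]
      simp [Polynomial.Chebyshev.T_one]; norm_num
    · rw [ceil_sqrt_nat 2 2 (by norm_num) (by norm_num) (by norm_num)]
      simp [Polynomial.Chebyshev.T_two]; norm_num
    · rw [ceil_sqrt_nat 3 2 (by norm_num) (by norm_num) (by norm_num)]
      simp [Polynomial.Chebyshev.T_two]; norm_num
    · rw [ceil_sqrt_nat 4 2 (by norm_num) (by norm_num) (by norm_num)]
      simp [Polynomial.Chebyshev.T_two]; norm_num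
    · rw [ceil_sqrt_nat 5 3 (by norm_num) (by norm_num) (by norm_num)]
      simp [T_three_aux]; norm_num
    · rw [ceil_sqrt_nat 6 3 (by norm_num) (by norm_num) (by norm_num)]
      simp [T_three_aux]; norm_num
    · rw [ceil_sqrt_nat 7 3 (by norm_num) (by norm_num) (by norm_num)]
      simp [T_three_aux]; norm_num
  · -- analytic case, k ≥ 8
    have hk8 : (8:ℝ) ≤ k := by exact_mod_cast h8
    have hkpos : (0:ℝ) < k := by linarith
    set x : ℝ := 1 + 1 / (k:ℝ) with hxdef
    have hx1 : 1 ≤ x := by rw [hxdef]; nlinarith [one_div_pos.mpr hkpos]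
    set m := Real.sqrt (k:ℝ) with hmdef
    have hm2 : m^2 = k := Real.sq_sqrt hkpos.le
    have hmpos : 0 < m := Real.sqrt_pos.mpr hkpos
    set R := ⌈m⌉₊ with hRdef
    have hmR : m ≤ (R:ℝ) := Nat.le_ceil _
    set c := Real.sqrt 2 with hcdef
    have hc2 : c^2 = 2 := Real.sq_sqrt (by norm_num)
    have hcpos : 0 < c := Real.sqrt_pos.mpr (by norm_num)
    have hc14 : (1.414:ℝ) ≤ c := by
      rw [hcdef, show (1.414:ℝ) = Real.sqrt (1.414^2) by rw [Real.sqrt_sq]; norm_num]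
      exact Real.sqrt_le_sqrt (by norm_num)
    set s := Real.sqrt (x^2 - 1) with hsdef
    have hs0 : 0 ≤ s := Real.sqrt_nonneg _
    have hsc : c / m ≤ s := by
      rw [hsdef]
      have hsq : (c/m)^2 ≤ x^2 - 1 := by
        rw [div_pow, hc2, hm2, hxdef]
        have hid : (1 + 1/(k:ℝ))^2 - 1 = 2/(k:ℝ) + 1/(k:ℝ)^2 := by field_simp; ring
        rw [hid]
        have h2 : 0 ≤ 1/(k:ℝ)^2 := by positivity
        linarith
      calc c/m = Real.sqrt ((c/m)^2) := (Real.sqrt_sq (by positivity)).symm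
      _ ≤ Real.sqrt (x^2-1) := Real.sqrt_le_sqrt hsq
    set z := x + s with hzdef
    have hz1 : 1 ≤ z := by rw [hzdef]; linarith
    have hzpos : 0 < z := by linarith
    set t := Real.log z with htdef
    have hcoshx : Real.cosh t = x := by
      rw [htdef, hzdef, hsdef]; exact cosh_log_aux x hx1
    have heval : (Polynomial.Chebyshev.T ℝ (R:ℤ)).eval x = Real.cosh ((R:ℝ) * t) := by
      have h1 := T_real_cosh_aux (R:ℤ) t
      rw [hcoshx] at h1
      rw [h1]; norm_cast
    set e := c / (8*m) with hedef
    have hepos : 0 < e := by rw [hedef]; positivity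
    have hm2c : 2*c ≤ m := by nlinarith [hm2, hc2, hmpos, hcpos, hk8, sq_nonneg (m - 2*c)]
    have he16 : e ≤ 1/16 := by rw [hedef, div_le_iff₀ (by positivity)]; linarith
    have h8e : 8*e = c/m := by rw [hedef]; field_simp
    have h8me : 8*m*e = c := by rw [hedef]; field_simp
    have h32e : 32*e^2 = 1/(k:ℝ) := by
      rw [hedef, div_pow, hc2, ← hm2]; field_simp; ring
    clear_value x m R c s z t e
    rw [heval]
    clear heval hcoshx
    have hbz : (1+e)^8 ≤ z := by
      refine (pow_eight_bound e hepos he16).trans ?_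
      rw [h8e, h32e, hzdef, hxdef]; linarith
    have hLe : Real.log (2 + Real.sqrt 3) ≤ 8*(R:ℝ)*(e/(1+e)) := by
      have h1 : 8*m*e ≤ 8*(R:ℝ)*e := by
        have := mul_le_mul_of_nonneg_right (show 8*m ≤ 8*(R:ℝ) by linarith) hepos.le
        linarith
      have h4 : 1.33 * (1+e) ≤ c := by linarith
      have h5 : (1.33:ℝ) ≤ c/(1+e) := by rw [le_div_iff₀ (by linarith)]; exact h4
      have h6 : c/(1+e) ≤ (8*(R:ℝ)*e)/(1+e) := by
        rw [← h8me]; gcongr <;> linarith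
      calc Real.log (2 + Real.sqrt 3) ≤ 1.33 := log_two_add_sqrt_three_le
      _ ≤ c/(1+e) := h5
      _ ≤ (8*(R:ℝ)*e)/(1+e) := h6
      _ = 8*(R:ℝ)*(e/(1+e)) := by ring
    have hy : 2 + Real.sqrt 3 ≤ z^R := by
      calc 2 + Real.sqrt 3 = Real.exp (Real.log (2 + Real.sqrt 3)) :=
            (Real.exp_log (by positivity)).symm
      _ ≤ Real.exp (((8*R : ℕ):ℝ) * (e/(1+e))) := by
            apply Real.exp_le_exp.mpr; push_cast; linarith [hLe]
      _ = Real.exp (e/(1+e)) ^ (8*R) := Real.exp_nat_mul _ _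
      _ ≤ (1+e)^(8*R) := pow_le_pow_left₀ (Real.exp_pos _).le (exp_frac_le e hepos) _
      _ = ((1+e)^8)^R := by rw [pow_mul]
      _ ≤ z^R := pow_le_pow_left₀ (by positivity) hbz R
    have hexpt : Real.exp ((R:ℝ) * t) = z^R := by
      rw [Real.exp_nat_mul, htdef, Real.exp_log hzpos]
    have hcosh : Real.cosh ((R:ℝ) * t) = (z^R + (z^R)⁻¹)/2 := by
      rw [Real.cosh_eq, Real.exp_neg, hexpt]
    rw [hcosh]
    exact final_ineq _ (by positivity) hy
end

section
/- Let D be a database of n items u ∈ {0,1}^d, each of width at most w (i.e., each u has at most w coordinates equal to 0), let P be the monotone conjunction predicate, and fix t ∈ [0,1]. Then the function f^D_t(q) = 𝟙{(1/n)Σ_{u∈D} P(q,u) ≥ t} is computed over all of {0,1}^d by a polynomial threshold function of degree O(√(w log n)). -/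
open Polynomial Real

set_option maxHeartbeats 1000000

namespace ConjPTF

lemma T_nat_cosh (n : ℕ) (s : ℝ) :
    (Polynomial.Chebyshev.T ℝ (n : ℤ)).eval (Real.cosh s) = Real.cosh (n * s) := by
  induction n using Nat.twoStepInduction with
  | zero => simp [Polynomial.Chebyshev.T_zero]
  | one => simp [Polynomial.Chebyshev.T_one]
  | more n ih2 ih1 =>
    have : ((n : ℤ) + 2 : ℤ) = ((n + 2 : ℕ) : ℤ) := by push_cast; ring
    rw [show ((n + 2 : ℕ) : ℤ) = (n : ℤ) + 2 by push_cast; ring,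
      Polynomial.Chebyshev.T_add_two]
    have h1 : ((n : ℤ) + 1 : ℤ) = ((n + 1 : ℕ) : ℤ) := by push_cast; ring
    simp only [eval_sub, eval_mul, eval_ofNat, eval_X, h1, ih1, ih2]
    have e1 : ((n:ℝ) + 2) * s = ((n+1 : ℕ) : ℝ) * s + s := by push_cast; ring
    have e2 : (n : ℝ) * s = ((n+1 : ℕ) : ℝ) * s - s := by push_cast; ring
    rw [show ((n + 2 : ℕ):ℝ) = (n:ℝ) + 2 by push_cast; ring, e1, e2,
      Real.cosh_add, Real.cosh_sub]
    ring

lemma T_natDegree_le (n : ℕ) : (Polynomial.Chebyshev.T ℝ (n : ℤ)).natDegree ≤ n := by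
  induction n using Nat.twoStepInduction with
  | zero => simp [Polynomial.Chebyshev.T_zero]
  | one => simp [Polynomial.Chebyshev.T_one]
  | more n ih2 ih1 =>
    rw [show ((n + 2 : ℕ) : ℤ) = (n : ℤ) + 2 by push_cast; ring,
      Polynomial.Chebyshev.T_add_two]
    refine (natDegree_sub_le _ _).trans ?_
    have h1 : ((n : ℤ) + 1 : ℤ) = ((n + 1 : ℕ) : ℤ) := by push_cast; ring
    rw [h1]
    have hX : (2 * X : ℝ[X]).natDegree ≤ 1 :=
      (natDegree_mul_le).trans (by simp)
    have hmul : (2 * X * Polynomial.Chebyshev.T ℝ ((n+1 : ℕ) : ℤ)).natDegree ≤ 1 + (n + 1) :=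
      (natDegree_mul_le).trans (add_le_add hX ih1)
    refine max_le (hmul.trans (by omega)) (ih2.trans (by omega))

lemma abs_T_le_one {x : ℝ} (n : ℕ) (h : |x| ≤ 1) :
    |(Polynomial.Chebyshev.T ℝ (n : ℤ)).eval x| ≤ 1 := by
  have h1 : -1 ≤ x := by linarith [abs_le.mp h |>.1]
  have h2 : x ≤ 1 := (abs_le.mp h).2
  have := Polynomial.Chebyshev.T_real_cos (Real.arccos x) (n : ℤ)
  rw [Real.cos_arccos h1 h2] at this
  rw [this]
  exact Real.abs_cos_le_one _

noncomputable def arcosh (x : ℝ) : ℝ := Real.log (x + Real.sqrt (x^2 - 1))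

lemma cosh_arcosh {x : ℝ} (hx : 1 ≤ x) : Real.cosh (arcosh x) = x := by
  have hs : 0 ≤ x^2 - 1 := by nlinarith
  have hsq : Real.sqrt (x^2-1) ^ 2 = x^2 - 1 := Real.sq_sqrt hs
  have hy : 0 < x + Real.sqrt (x^2 - 1) := by positivity
  rw [arcosh, Real.cosh_eq, Real.exp_log hy, ← Real.log_inv, Real.exp_log (by positivity)]
  rw [div_eq_iff (by norm_num : (2:ℝ) ≠ 0)]
  have hne : x + Real.sqrt (x^2-1) ≠ 0 := ne_of_gt hy
  field_simp
  nlinarith [Real.sqrt_nonneg (x^2-1)]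

lemma arcosh_nonneg {x : ℝ} (hx : 1 ≤ x) : 0 ≤ arcosh x := by
  have hs : 0 ≤ Real.sqrt (x^2-1) := Real.sqrt_nonneg _
  exact Real.log_nonneg (by linarith)

lemma arcosh_mono {x y : ℝ} (hx : 1 ≤ x) (hxy : x ≤ y) : arcosh x ≤ arcosh y := by
  have : 0 ≤ x^2 - 1 := by nlinarith
  refine Real.log_le_log (by positivity) ?_
  have : Real.sqrt (x^2-1) ≤ Real.sqrt (y^2-1) := by
    apply Real.sqrt_le_sqrt; nlinarith
  linarith

lemma T_eval_ge_one {x : ℝ} (n : ℕ) (hx : 1 ≤ x) :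
    1 ≤ (Polynomial.Chebyshev.T ℝ (n : ℤ)).eval x := by
  have := T_nat_cosh n (arcosh x)
  rw [cosh_arcosh hx] at this
  rw [this]
  exact Real.one_le_cosh _

lemma T_mono {x y : ℝ} (n : ℕ) (hx : 1 ≤ x) (hxy : x ≤ y) :
    (Polynomial.Chebyshev.T ℝ (n : ℤ)).eval x ≤ (Polynomial.Chebyshev.T ℝ (n : ℤ)).eval y := by
  have h1 := T_nat_cosh n (arcosh x)
  have h2 := T_nat_cosh n (arcosh y)
  rw [cosh_arcosh hx] at h1
  rw [cosh_arcosh (hx.trans hxy)] at h2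
  rw [h1, h2, Real.cosh_le_cosh]
  have a1 := arcosh_nonneg hx
  have a2 := arcosh_mono hx hxy
  rw [abs_of_nonneg (by positivity : (0:ℝ) ≤ (n:ℝ) * arcosh x),
    abs_of_nonneg (mul_nonneg (Nat.cast_nonneg n) (a1.trans a2))]
  exact mul_le_mul_of_nonneg_left a2 (Nat.cast_nonneg n)

lemma cosh_le_one_add_sq {r : ℝ} (h0 : 0 ≤ r) (h1 : r ≤ 1) : Real.cosh r ≤ 1 + r^2 := by
  have hb1 := Real.exp_bound (x := r) (by rw [abs_of_nonneg h0]; exact h1) (n := 2) (by norm_num)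
  have hb2 := Real.exp_bound (x := -r) (by rw [abs_neg, abs_of_nonneg h0]; exact h1) (n := 2) (by norm_num)
  rw [abs_of_nonneg h0] at hb1
  rw [abs_neg, abs_of_nonneg h0] at hb2
  simp only [Finset.sum_range_succ, Finset.sum_range_zero] at hb1 hb2
  norm_num at hb1 hb2
  have e1 : Real.exp r ≤ 1 + r + r^2 * (3/4) := by
    have := abs_le.mp hb1 |>.2; nlinarith
  have e2 : Real.exp (-r) ≤ 1 - r + r^2 * (3/4) := by
    have := abs_le.mp hb2 |>.2; nlinarith
  rw [Real.cosh_eq]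
  nlinarith

lemma T_growth {δ : ℝ} (n : ℕ) (h0 : 0 ≤ δ) (h2 : δ ≤ 2) :
    Real.exp (n * Real.sqrt (δ/2)) ≤ 2 * (Polynomial.Chebyshev.T ℝ (n : ℤ)).eval (1 + δ) := by
  have hx : (1:ℝ) ≤ 1 + δ := by linarith
  have hev := T_nat_cosh n (arcosh (1+δ))
  rw [cosh_arcosh hx] at hev
  rw [hev]
  have hr0 : 0 ≤ Real.sqrt (δ/2) := Real.sqrt_nonneg _
  have hr1 : Real.sqrt (δ/2) ≤ 1 := by
    rw [show (1:ℝ) = Real.sqrt 1 by simp]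
    apply Real.sqrt_le_sqrt; linarith
  have hs : Real.sqrt (δ/2) ≤ arcosh (1+δ) := by
    have hc : Real.cosh (Real.sqrt (δ/2)) ≤ Real.cosh (arcosh (1+δ)) := by
      rw [cosh_arcosh hx]
      refine (cosh_le_one_add_sq hr0 hr1).trans ?_
      rw [Real.sq_sqrt (by linarith : (0:ℝ) ≤ δ/2)]
      linarith
    have := Real.cosh_le_cosh.mp hc
    rwa [abs_of_nonneg hr0, abs_of_nonneg (arcosh_nonneg hx)] at this
  have h1 : Real.exp (n * Real.sqrt (δ/2)) ≤ Real.exp (n * arcosh (1+δ)) := by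
    apply Real.exp_le_exp.mpr
    exact mul_le_mul_of_nonneg_left hs (Nat.cast_nonneg n)
  refine h1.trans ?_
  rw [Real.cosh_eq]
  have := Real.exp_pos (-(n * arcosh (1+δ)))
  ring_nf
  nlinarith [Real.exp_pos (-(↑n * arcosh (1+δ)))]

lemma pow_self_le_factorial_mul_exp : ∀ b : ℕ, (b:ℝ)^b ≤ b.factorial * Real.exp b
  | 0 => by norm_num
  | (b+1) => by
    have ih := pow_self_le_factorial_mul_exp b
    rcases Nat.eq_zero_or_pos b with hb | hb
    · subst hb
      have h1 : (2:ℝ) ≤ Real.exp 1 := by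
        have := Real.add_one_le_exp (1:ℝ); linarith
      have h2 : ((0:ℕ)+1:ℕ) = 1 := rfl
      rw [h2]
      push_cast
      norm_num
      all_goals linarith
    have hb0 : (0:ℝ) < b := by exact_mod_cast hb
    have key : ((b:ℝ)+1)^b ≤ (b:ℝ)^b * Real.exp 1 := by
      have h1 : ((b:ℝ)+1) = b * (1 + 1/b) := by field_simp
      rw [h1, mul_pow]
      have h2 : (1 + 1/(b:ℝ))^b ≤ Real.exp 1 := by
        have : (1 + 1/(b:ℝ)) ≤ Real.exp (1/b) := by
          have := Real.add_one_le_exp (1/(b:ℝ)); linarith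
        calc (1 + 1/(b:ℝ))^b ≤ (Real.exp (1/b))^b := by
              apply pow_le_pow_left₀ (by positivity) this
          _ = Real.exp ((1/b) * b) := by rw [← Real.exp_nat_mul]; ring_nf
          _ = Real.exp 1 := by rw [one_div, inv_mul_cancel₀ (ne_of_gt hb0)]
      exact mul_le_mul_of_nonneg_left h2 (by positivity)
    have hcast : ((b+1 : ℕ):ℝ) ^ (b+1) = ((b:ℝ)+1) * ((b:ℝ)+1)^b := by push_cast; ring
    rw [hcast]
    calc ((b:ℝ)+1) * ((b:ℝ)+1)^b ≤ ((b:ℝ)+1) * ((b:ℝ)^b * Real.exp 1) := by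
          apply mul_le_mul_of_nonneg_left key (by positivity)
      _ ≤ ((b:ℝ)+1) * (b.factorial * Real.exp b * Real.exp 1) := by
          apply mul_le_mul_of_nonneg_left _ (by positivity)
          apply mul_le_mul_of_nonneg_right ih (Real.exp_pos 1).le
      _ = ((b+1 : ℕ) : ℝ) * b.factorial * Real.exp ((b:ℝ)+1) := by
          rw [Real.exp_add]; push_cast; ring
      _ = (b+1).factorial * Real.exp ((b:ℕ)+1 : ℝ) := by
          rw [Nat.factorial_succ]; push_cast; ring
      _ = (b+1).factorial * Real.exp ((b+1 : ℕ) : ℝ) := by norm_num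

noncomputable def gPoly (b : ℕ) : ℝ[X] :=
  ∏ j ∈ Finset.range b, (1 - C (((j:ℝ)+1))⁻¹ * X)

lemma gPoly_eval (b : ℕ) (x : ℝ) :
    (gPoly b).eval x = ∏ j ∈ Finset.range b, (1 - x/((j:ℝ)+1)) := by
  rw [gPoly, Polynomial.eval_prod]
  refine Finset.prod_congr rfl fun j _ => ?_
  simp only [eval_sub, eval_one, eval_mul, eval_C, eval_X, div_eq_inv_mul]

lemma gPoly_eval_zero (b : ℕ) : (gPoly b).eval 0 = 1 := by
  rw [gPoly_eval]
  apply Finset.prod_eq_one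
  intro j _
  rw [zero_div, sub_zero]

lemma gPoly_natDegree (b : ℕ) : (gPoly b).natDegree ≤ b := by
  refine (Polynomial.natDegree_prod_le _ _).trans ?_
  have : ∀ j ∈ Finset.range b, (1 - C (((j:ℝ)+1))⁻¹ * X).natDegree ≤ 1 := by
    intro j _
    refine (natDegree_sub_le _ _).trans ?_
    simp only [natDegree_one]
    refine max_le (by norm_num) ((natDegree_C_mul_le _ _).trans (by simp))
  have h := Finset.sum_le_card_nsmul (Finset.range b)
    (fun j => (1 - C (((j:ℝ)+1))⁻¹ * X).natDegree) 1 this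
  simpa using h

lemma gPoly_eval_eq_zero {b m : ℕ} (h1 : 1 ≤ m) (h2 : m ≤ b) :
    (gPoly b).eval (m:ℝ) = 0 := by
  rw [gPoly_eval]
  apply Finset.prod_eq_zero (i := m - 1) (by simp; omega)
  have : ((m - 1 : ℕ) : ℝ) + 1 = (m : ℝ) := by
    have : (1:ℕ) ≤ m := h1; push_cast [Nat.cast_sub this]; ring
  rw [this]
  have hm : (m:ℝ) ≠ 0 := by positivity
  field_simp
  norm_num

lemma gPoly_eval_abs_le {b m : ℕ} (hb : 1 ≤ b) (h : b < m) :
    |(gPoly b).eval (m:ℝ)| ≤ (m:ℝ)^b / b.factorial := by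
  rw [gPoly_eval, Finset.abs_prod]
  have key : ∀ j ∈ Finset.range b, |1 - (m:ℝ)/((j:ℝ)+1)| ≤ (m:ℝ)/((j:ℝ)+1) := by
    intro j hj
    have hj' : (j:ℕ) + 1 ≤ b := by simpa using Finset.mem_range.mp hj
    have hge : (1:ℝ) ≤ (m:ℝ)/((j:ℝ)+1) := by
      rw [le_div_iff₀ (by positivity)]
      have : (j:ℝ) + 1 ≤ (m:ℝ) := by
        have : j + 1 ≤ m := by omega
        exact_mod_cast this
      linarith
    rw [abs_of_nonpos (by linarith)]
    linarith
  calc ∏ j ∈ Finset.range b, |1 - (m:ℝ)/((j:ℝ)+1)|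
      ≤ ∏ j ∈ Finset.range b, (m:ℝ)/((j:ℝ)+1) := by
        apply Finset.prod_le_prod (fun j _ => abs_nonneg _) key
    _ = (m:ℝ)^b / ∏ j ∈ Finset.range b, ((j:ℝ)+1) := by
        rw [Finset.prod_div_distrib, Finset.prod_const, Finset.card_range]
    _ = (m:ℝ)^b / b.factorial := by
        congr 1
        have : ∏ j ∈ Finset.range b, ((j:ℝ)+1) = ((∏ j ∈ Finset.range b, (j+1) : ℕ) : ℝ) := by
          push_cast; ring
        rw [this, Finset.prod_range_add_one_eq_factorial]

noncomputable def qPoly (k : ℕ) (a c : ℝ) : ℝ[X] :=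
  C (((Polynomial.Chebyshev.T ℝ (k:ℤ)).eval (1+a))⁻¹) *
    ((Polynomial.Chebyshev.T ℝ (k:ℤ)).comp (C (1+a) - C c * X))

lemma qPoly_eval (k : ℕ) (a c x : ℝ) :
    (qPoly k a c).eval x
      = ((Polynomial.Chebyshev.T ℝ (k:ℤ)).eval (1+a))⁻¹ *
        (Polynomial.Chebyshev.T ℝ (k:ℤ)).eval (1 + a - c*x) := by
  simp [qPoly, Polynomial.eval_comp]

lemma qPoly_natDegree (k : ℕ) (a c : ℝ) : (qPoly k a c).natDegree ≤ k := by
  refine (natDegree_C_mul_le _ _).trans ?_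
  refine (natDegree_comp_le).trans ?_
  have h1 : (C (1+a) - C c * X : ℝ[X]).natDegree ≤ 1 := by
    refine (natDegree_sub_le _ _).trans ?_
    exact max_le (by simp) ((natDegree_C_mul_le _ _).trans (by simp))
  calc (Polynomial.Chebyshev.T ℝ (k:ℤ)).natDegree * (C (1+a) - C c * X : ℝ[X]).natDegree
      ≤ k * 1 := Nat.mul_le_mul (T_natDegree_le k) h1
    _ = k := by ring

lemma qPoly_eval_zero (k : ℕ) {a : ℝ} (ha : 0 ≤ a) (c : ℝ) : (qPoly k a c).eval 0 = 1 := by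
  have hden : (1:ℝ) ≤ (Polynomial.Chebyshev.T ℝ (k:ℤ)).eval (1+a) :=
    T_eval_ge_one k (by linarith)
  rw [qPoly_eval]
  rw [mul_zero, sub_zero]
  exact inv_mul_cancel₀ (by linarith)

lemma qPoly_bound_high (k : ℕ) {a c x : ℝ} (ha : 0 ≤ a)
    (h1 : 1 ≤ 1 + a - c*x) (h2 : 1 + a - c*x ≤ 1 + a) :
    |(qPoly k a c).eval x| ≤ 1 := by
  have hden : (1:ℝ) ≤ (Polynomial.Chebyshev.T ℝ (k:ℤ)).eval (1+a) :=
    T_eval_ge_one k (by linarith)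
  have hnum1 : (1:ℝ) ≤ (Polynomial.Chebyshev.T ℝ (k:ℤ)).eval (1+a-c*x) :=
    T_eval_ge_one k h1
  have hnum2 : (Polynomial.Chebyshev.T ℝ (k:ℤ)).eval (1+a-c*x)
      ≤ (Polynomial.Chebyshev.T ℝ (k:ℤ)).eval (1+a) := T_mono k h1 h2
  rw [qPoly_eval, abs_mul, abs_of_nonneg (by positivity : (0:ℝ) ≤ (_ : ℝ)⁻¹),
    abs_of_nonneg (by linarith)]
  rw [inv_mul_le_iff₀ (by linarith)]
  calc eval (1+a-c*x) (Polynomial.Chebyshev.T ℝ (k:ℤ))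
      ≤ eval (1+a) (Polynomial.Chebyshev.T ℝ (k:ℤ)) := hnum2
    _ ≤ eval (1+a) (Polynomial.Chebyshev.T ℝ (k:ℤ)) * 1 := by
        rw [mul_one]

lemma qPoly_bound_low (k : ℕ) {a c x : ℝ} (ha0 : 0 ≤ a) (ha2 : a ≤ 2)
    (hy : |1 + a - c*x| ≤ 1) :
    |(qPoly k a c).eval x| ≤ 2 * Real.exp (-((k:ℝ) * Real.sqrt (a/2))) := by
  have hgrow := T_growth k ha0 ha2
  have hden : (1:ℝ) ≤ (Polynomial.Chebyshev.T ℝ (k:ℤ)).eval (1+a) :=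
    T_eval_ge_one k (by linarith)
  have hnum : |(Polynomial.Chebyshev.T ℝ (k:ℤ)).eval (1+a-c*x)| ≤ 1 :=
    abs_T_le_one k hy
  rw [qPoly_eval, abs_mul, abs_of_nonneg (by positivity : (0:ℝ) ≤ (_ : ℝ)⁻¹)]
  calc ((Polynomial.Chebyshev.T ℝ (k:ℤ)).eval (1+a))⁻¹
        * |(Polynomial.Chebyshev.T ℝ (k:ℤ)).eval (1+a-c*x)|
      ≤ ((Polynomial.Chebyshev.T ℝ (k:ℤ)).eval (1+a))⁻¹ * 1 := by
        apply mul_le_mul_of_nonneg_left hnum (by positivity)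
    _ = ((Polynomial.Chebyshev.T ℝ (k:ℤ)).eval (1+a))⁻¹ := mul_one _
    _ ≤ 2 * Real.exp (-((k:ℝ) * Real.sqrt (a/2))) := by
        have hden0 : (0:ℝ) < eval (1+a) (Polynomial.Chebyshev.T ℝ (k:ℤ)) := by linarith
        rw [inv_le_iff_one_le_mul₀ hden0]
        have h1 : (1:ℝ) = Real.exp ((k:ℝ) * Real.sqrt (a/2))
            * Real.exp (-((k:ℝ) * Real.sqrt (a/2))) := by
          rw [← Real.exp_add]; simp
        calc (1:ℝ) = Real.exp ((k:ℝ) * Real.sqrt (a/2))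
              * Real.exp (-((k:ℝ) * Real.sqrt (a/2))) := h1
          _ ≤ (2 * eval (1+a) (Polynomial.Chebyshev.T ℝ (k:ℤ)))
              * Real.exp (-((k:ℝ) * Real.sqrt (a/2))) := by
                apply mul_le_mul_of_nonneg_right hgrow (Real.exp_pos _).le
          _ = 2 * Real.exp (-((k:ℝ) * Real.sqrt (a/2)))
              * eval (1+a) (Polynomial.Chebyshev.T ℝ (k:ℤ)) := by ring

lemma sqrt_pow_half (i : ℕ) : Real.sqrt ((2⁻¹:ℝ)^i) = (Real.sqrt 2⁻¹)^i := by
  induction i with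
  | zero => simp
  | succ n ih => rw [pow_succ, pow_succ, Real.sqrt_mul (by positivity), ih]

def Wb (b i : ℕ) : ℕ := b * 2^i

noncomputable def delb (b w i : ℕ) : ℝ := 2 * (Wb b i : ℝ) / w

noncomputable def kb (L : ℝ) (b w i : ℕ) : ℕ :=
  ⌈(L + 3*(b:ℝ)) * Real.sqrt ((w:ℝ) / (Wb b i : ℝ))⌉₊

noncomputable def bigP (L : ℝ) (b w I : ℕ) : ℝ[X] :=
  gPoly b * ∏ i ∈ Finset.range I, qPoly (kb L b w i) (delb b w i) (2/(w:ℝ))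

lemma Wb_pos {b : ℕ} (hb : 1 ≤ b) (i : ℕ) : 0 < Wb b i := by
  have : 0 < 2^i := Nat.pow_pos (by norm_num)
  exact Nat.mul_pos hb this

lemma Wb_cast (b i : ℕ) : ((Wb b i : ℕ) : ℝ) = (b:ℝ) * 2^i := by
  rw [Wb]; push_cast; ring

lemma Wb_mono (b : ℕ) {i j : ℕ} (h : i ≤ j) : Wb b i ≤ Wb b j :=
  Nat.mul_le_mul_left b (Nat.pow_le_pow_right (by norm_num) h)

lemma delb_nonneg {b w : ℕ} (i : ℕ) : 0 ≤ delb b w i := by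
  rw [delb]; positivity

lemma bigP_eval (L : ℝ) (b w I : ℕ) (x : ℝ) :
    (bigP L b w I).eval x = (gPoly b).eval x *
      ∏ i ∈ Finset.range I, (qPoly (kb L b w i) (delb b w i) (2/(w:ℝ))).eval x := by
  rw [bigP, Polynomial.eval_mul, Polynomial.eval_prod]

lemma bigP_eval_zero (L : ℝ) (b w I : ℕ) : (bigP L b w I).eval 0 = 1 := by
  rw [bigP_eval, gPoly_eval_zero, one_mul]
  apply Finset.prod_eq_one
  intro i _
  exact qPoly_eval_zero _ (delb_nonneg i) _

lemma bigP_natDegree (L : ℝ) (b w I : ℕ) :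
    (bigP L b w I).natDegree ≤ b + ∑ i ∈ Finset.range I, kb L b w i := by
  rw [bigP]
  refine (Polynomial.natDegree_mul_le).trans ?_
  refine add_le_add (gPoly_natDegree b) ?_
  refine (Polynomial.natDegree_prod_le _ _).trans ?_
  exact Finset.sum_le_sum fun i _ => qPoly_natDegree _ _ _


lemma div_mono_num {a b c : ℝ} (h : a ≤ b) (hc : 0 ≤ c) : a / c ≤ b / c := by
  rw [div_eq_mul_inv, div_eq_mul_inv]
  exact mul_le_mul_of_nonneg_right h (inv_nonneg.mpr hc)

lemma kb_key (L : ℝ) (hL : 0 ≤ L) {b w i : ℕ} (hb : 1 ≤ b) (hWw : Wb b i ≤ w) :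
    L + 3*(b:ℝ) ≤ (kb L b w i : ℝ) * Real.sqrt (delb b w i / 2) := by
  have hWpos : 0 < Wb b i := Wb_pos hb i
  have hw0 : (0:ℝ) < w := by
    have : 0 < w := lt_of_lt_of_le hWpos hWw
    exact_mod_cast this
  have hW0 : (0:ℝ) < (Wb b i : ℝ) := by exact_mod_cast hWpos
  have hsq : Real.sqrt (delb b w i / 2) = Real.sqrt ((Wb b i : ℝ)/w) := by
    congr 1
    rw [delb]
    field_simp
  have h1 : (L + 3*(b:ℝ)) * Real.sqrt ((w:ℝ)/(Wb b i : ℝ)) ≤ (kb L b w i : ℝ) :=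
    Nat.le_ceil _
  have hprod : Real.sqrt ((w:ℝ)/(Wb b i:ℝ)) * Real.sqrt ((Wb b i:ℝ)/w) = 1 := by
    rw [← Real.sqrt_mul (by positivity)]
    have : (w:ℝ)/(Wb b i:ℝ) * ((Wb b i:ℝ)/w) = 1 := by field_simp
    rw [this, Real.sqrt_one]
  have hb0 : (0:ℝ) ≤ (b:ℝ) := by positivity
  calc L + 3*(b:ℝ) = (L + 3*(b:ℝ)) * (Real.sqrt ((w:ℝ)/(Wb b i:ℝ)) * Real.sqrt ((Wb b i:ℝ)/w)) := by
        rw [hprod, mul_one]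
    _ = ((L + 3*(b:ℝ)) * Real.sqrt ((w:ℝ)/(Wb b i:ℝ))) * Real.sqrt ((Wb b i:ℝ)/w) := by ring
    _ ≤ (kb L b w i : ℝ) * Real.sqrt ((Wb b i:ℝ)/w) := by
        apply mul_le_mul_of_nonneg_right h1 (Real.sqrt_nonneg _)
    _ = (kb L b w i : ℝ) * Real.sqrt (delb b w i / 2) := by rw [hsq]

lemma q_bound_low (L : ℝ) (hL : 0 ≤ L) {b w i m : ℕ} (hb : 1 ≤ b)
    (him : Wb b i < m) (hmw : m ≤ w) :
    |(qPoly (kb L b w i) (delb b w i) (2/(w:ℝ))).eval (m:ℝ)|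
      ≤ 2 * Real.exp (-(L + 3*(b:ℝ))) := by
  have hWpos : 0 < Wb b i := Wb_pos hb i
  have hw0 : (0:ℝ) < w := by
    have : 0 < w := lt_of_le_of_lt (Nat.zero_le _) (lt_of_lt_of_le him hmw)
    exact_mod_cast this
  have hWw : Wb b i ≤ w := le_trans (le_of_lt him) hmw
  have hWwr : (Wb b i : ℝ) ≤ (w:ℝ) := by exact_mod_cast hWw
  have hmr : (Wb b i : ℝ) < (m:ℝ) := by exact_mod_cast him
  have hmwr : (m:ℝ) ≤ (w:ℝ) := by exact_mod_cast hmw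
  have hδ2 : delb b w i ≤ 2 := by
    rw [delb, div_le_iff₀ hw0]
    linarith
  have hy : |1 + delb b w i - (2/(w:ℝ)) * m| ≤ 1 := by
    rw [abs_le]
    constructor
    · rw [delb]
      have h2 : (2/(w:ℝ)) * m ≤ 2 := by
        rw [div_mul_eq_mul_div, div_le_iff₀ hw0]
        linarith
      have h3 : 0 ≤ 2 * (Wb b i : ℝ) / w := by positivity
      linarith
    · rw [delb]
      have h4 : 2 * (Wb b i:ℝ) / w ≤ (2/(w:ℝ)) * m := by
        rw [div_mul_eq_mul_div]
        exact div_mono_num (by linarith) hw0.le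
      linarith
  have hbd := qPoly_bound_low (kb L b w i) (delb_nonneg i) hδ2 hy
  refine hbd.trans ?_
  have hkk := kb_key L hL hb hWw
  have : Real.exp (-((kb L b w i : ℝ) * Real.sqrt (delb b w i / 2)))
      ≤ Real.exp (-(L + 3*(b:ℝ))) := by
    apply Real.exp_le_exp.mpr
    linarith
  linarith [this]

lemma q_bound_high (L : ℝ) {b w i m : ℕ} (hb : 1 ≤ b) (hw : 1 ≤ w)
    (hmi : m ≤ Wb b i) :
    |(qPoly (kb L b w i) (delb b w i) (2/(w:ℝ))).eval (m:ℝ)| ≤ 1 := by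
  have hw0 : (0:ℝ) < w := by exact_mod_cast hw
  have hmir : (m:ℝ) ≤ (Wb b i : ℝ) := by exact_mod_cast hmi
  apply qPoly_bound_high _ (delb_nonneg i)
  · have : (2/(w:ℝ)) * m ≤ delb b w i := by
      rw [delb, div_mul_eq_mul_div]
      exact div_mono_num (by linarith) hw0.le
    linarith
  · have : 0 ≤ (2/(w:ℝ)) * m := by positivity
    linarith

lemma two_pow_le_exp (N : ℕ) : (2:ℝ)^N ≤ Real.exp N := by
  have h2e : (2:ℝ) ≤ Real.exp 1 := by
    have := Real.add_one_le_exp (1:ℝ); linarith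
  calc (2:ℝ)^N ≤ (Real.exp 1)^N := pow_le_pow_left₀ (by norm_num) h2e N
    _ = Real.exp N := Real.exp_one_pow N

lemma final_numeric (L : ℝ) (hL : 2 ≤ L) {b J : ℕ} (hb : 1 ≤ b) (hJ : 1 ≤ J) (mr : ℝ)
    (hm0 : 0 ≤ mr) (hmW : mr ≤ (b:ℝ) * 2^J) :
    (mr^b / (b.factorial:ℝ)) * (2 * Real.exp (-(L+3*(b:ℝ))))^J ≤ Real.exp (-L) := by
  have hfac : (0:ℝ) < (b.factorial:ℝ) := by exact_mod_cast b.factorial_pos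
  have h1 : mr^b ≤ ((b:ℝ) * 2^J)^b := pow_le_pow_left₀ hm0 hmW b
  have h2 : ((b:ℝ) * 2^J)^b = (b:ℝ)^b * (2:ℝ)^(J*b) := by
    rw [mul_pow, ← pow_mul]
  have h3 : (b:ℝ)^b ≤ (b.factorial:ℝ) * Real.exp b := pow_self_le_factorial_mul_exp b
  have h4 : mr^b / (b.factorial:ℝ) ≤ Real.exp b * (2:ℝ)^(J*b) := by
    rw [div_le_iff₀ hfac]
    calc mr^b ≤ (b:ℝ)^b * (2:ℝ)^(J*b) := by rw [← h2]; exact h1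
      _ ≤ ((b.factorial:ℝ) * Real.exp b) * (2:ℝ)^(J*b) := by
          apply mul_le_mul_of_nonneg_right h3 (by positivity)
      _ = Real.exp b * (2:ℝ)^(J*b) * (b.factorial:ℝ) := by ring
  have h5 : (2 * Real.exp (-(L+3*(b:ℝ))))^J = (2:ℝ)^J * Real.exp (-(J:ℝ)*(L+3*(b:ℝ))) := by
    rw [mul_pow, ← Real.exp_nat_mul]
    ring_nf
  have hρ0 : (0:ℝ) ≤ (2 * Real.exp (-(L+3*(b:ℝ))))^J := by positivity
  calc (mr^b / (b.factorial:ℝ)) * (2 * Real.exp (-(L+3*(b:ℝ))))^J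
      ≤ (Real.exp b * (2:ℝ)^(J*b)) * ((2:ℝ)^J * Real.exp (-(J:ℝ)*(L+3*(b:ℝ)))) := by
        rw [← h5]
        apply mul_le_mul_of_nonneg_right h4 hρ0
    _ = Real.exp b * ((2:ℝ)^(J*b) * (2:ℝ)^J) * Real.exp (-(J:ℝ)*(L+3*(b:ℝ))) := by ring
    _ = Real.exp b * (2:ℝ)^(J*b + J) * Real.exp (-(J:ℝ)*(L+3*(b:ℝ))) := by
        rw [pow_add]
    _ ≤ Real.exp b * Real.exp ((J*b + J : ℕ)) * Real.exp (-(J:ℝ)*(L+3*(b:ℝ))) := by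
        apply mul_le_mul_of_nonneg_right _ (Real.exp_pos _).le
        apply mul_le_mul_of_nonneg_left (two_pow_le_exp _) (Real.exp_pos _).le
    _ = Real.exp ((b:ℝ) + ((J:ℝ)*(b:ℝ) + J) + (-(J:ℝ)*(L+3*(b:ℝ)))) := by
        rw [← Real.exp_add, ← Real.exp_add]
        push_cast
        ring_nf
    _ ≤ Real.exp (-L) := by
        apply Real.exp_le_exp.mpr
        have hJr : (1:ℝ) ≤ (J:ℝ) := by exact_mod_cast hJ
        have hbr : (1:ℝ) ≤ (b:ℝ) := by exact_mod_cast hb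
        nlinarith [mul_nonneg (sub_nonneg.mpr hJr) (sub_nonneg.mpr hL),
          mul_nonneg (sub_nonneg.mpr hJr) (sub_nonneg.mpr hbr)]

lemma bigP_abs_le (L : ℝ) (hL : 2 ≤ L) {b w : ℕ} (hb : 1 ≤ b) (hbw : b ≤ w)
    {m : ℕ} (hm1 : 1 ≤ m) (hmw : m ≤ w) :
    |(bigP L b w (Nat.log 2 w + 1)).eval (m:ℝ)| ≤ Real.exp (-L) := by
  set I := Nat.log 2 w + 1 with hIdef
  rcases le_or_gt m b with hmb | hbm
  · -- m ≤ b : gPoly vanishes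
    rw [bigP_eval, gPoly_eval_eq_zero hm1 hmb, zero_mul, abs_zero]
    exact (Real.exp_pos _).le
  · -- b < m
    have hw1 : 1 ≤ w := le_trans hm1 hmw
    have hw0 : (0:ℝ) < w := by exact_mod_cast hw1
    have hL0 : (0:ℝ) ≤ L := by linarith
    -- find the block index j
    set P : ℕ → Prop := fun i => Wb b i < m with hPdef
    have hP0 : P 0 := by
      simp only [hPdef, Wb, pow_zero, mul_one]
      exact hbm
    set j := Nat.findGreatest P I with hjdef
    have hPj : P j := Nat.findGreatest_spec (Nat.zero_le I) hP0
    have hPInot : ¬ P I := by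
      have h1 : w < 2^I := Nat.lt_pow_succ_log_self (by norm_num) w
      have h2 : 2^I ≤ Wb b I := by
        rw [Wb]
        exact Nat.le_mul_of_pos_left _ hb
      simp only [hPdef, not_lt]
      omega
    have hjI : j < I := by
      rcases lt_or_eq_of_le (Nat.findGreatest_le (P := P) I) with h | h
      · exact h
      · exact absurd (h ▸ hPj) hPInot
    have hj2 : m ≤ Wb b (j+1) := by
      by_contra hcon
      push_neg at hcon
      exact Nat.findGreatest_is_greatest (Nat.lt_succ_self j) hjI hcon
    -- bound the product of q factors
    set ρ := 2 * Real.exp (-(L + 3*(b:ℝ))) with hρdef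
    have hρ0 : 0 ≤ ρ := by positivity
    have hρ1 : ρ ≤ 1 := by
      rw [hρdef]
      have h1 : (1:ℝ) ≤ L + 3*(b:ℝ) := by
        have : (1:ℝ) ≤ (b:ℝ) := by exact_mod_cast hb
        linarith
      have h2 : L + 3*(b:ℝ) + 1 ≤ Real.exp (L + 3*(b:ℝ)) := Real.add_one_le_exp _
      have h3 : (2:ℝ) ≤ Real.exp (L + 3*(b:ℝ)) := by linarith
      rw [Real.exp_neg]
      rw [mul_inv_le_iff₀ (Real.exp_pos _), one_mul]
      exact h3
    have hone : ∀ i, |(qPoly (kb L b w i) (delb b w i) (2/(w:ℝ))).eval (m:ℝ)| ≤ 1 := by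
      intro i
      rcases le_or_gt m (Wb b i) with hc | hc
      · exact q_bound_high L hb hw1 hc
      · exact (q_bound_low L hL0 hb hc hmw).trans hρ1
    have hlow : ∀ i ∈ Finset.range (j+1),
        |(qPoly (kb L b w i) (delb b w i) (2/(w:ℝ))).eval (m:ℝ)| ≤ ρ := by
      intro i hi
      have hij : i ≤ j := by
        have := Finset.mem_range.mp hi; omega
      have hWij : Wb b i ≤ Wb b j := Wb_mono b hij
      exact q_bound_low L hL0 hb (lt_of_le_of_lt hWij hPj) hmw
    have hprod : ∏ i ∈ Finset.range I,
        |(qPoly (kb L b w i) (delb b w i) (2/(w:ℝ))).eval (m:ℝ)| ≤ ρ^(j+1) := by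
      have hIsplit : I = (j+1) + (I - (j+1)) := by omega
      rw [hIsplit, Finset.prod_range_add]
      have h1 : ∏ i ∈ Finset.range (j+1),
          |(qPoly (kb L b w i) (delb b w i) (2/(w:ℝ))).eval (m:ℝ)| ≤ ρ^(j+1) := by
        calc ∏ i ∈ Finset.range (j+1),
            |(qPoly (kb L b w i) (delb b w i) (2/(w:ℝ))).eval (m:ℝ)|
            ≤ ∏ _i ∈ Finset.range (j+1), ρ :=
              Finset.prod_le_prod (fun i _ => abs_nonneg _) hlow
          _ = ρ^(j+1) := by rw [Finset.prod_const, Finset.card_range]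
      have h2 : ∏ x ∈ Finset.range (I - (j+1)),
          |(qPoly (kb L b w ((j+1)+x)) (delb b w ((j+1)+x)) (2/(w:ℝ))).eval (m:ℝ)| ≤ 1 :=
        Finset.prod_le_one (fun i _ => abs_nonneg _) (fun i _ => hone _)
      have hp1 : 0 ≤ ∏ i ∈ Finset.range (j+1),
          |(qPoly (kb L b w i) (delb b w i) (2/(w:ℝ))).eval (m:ℝ)| :=
        Finset.prod_nonneg (fun i _ => abs_nonneg _)
      have hp2 : 0 ≤ ∏ x ∈ Finset.range (I - (j+1)),
          |(qPoly (kb L b w ((j+1)+x)) (delb b w ((j+1)+x)) (2/(w:ℝ))).eval (m:ℝ)| :=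
        Finset.prod_nonneg (fun i _ => abs_nonneg _)
      calc _ ≤ ρ^(j+1) * 1 := mul_le_mul h1 h2 hp2 (by positivity)
        _ = ρ^(j+1) := mul_one _
    -- assemble
    have hg := gPoly_eval_abs_le hb hbm
    have hmr0 : (0:ℝ) ≤ (m:ℝ) := by positivity
    have hmW : (m:ℝ) ≤ (b:ℝ) * 2^(j+1) := by
      have := hj2
      have h3 : ((Wb b (j+1) : ℕ):ℝ) = (b:ℝ) * 2^(j+1) := Wb_cast b (j+1)
      calc (m:ℝ) ≤ ((Wb b (j+1):ℕ):ℝ) := by exact_mod_cast hj2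
        _ = (b:ℝ) * 2^(j+1) := h3
    have hfinal := final_numeric L hL hb (Nat.le_add_left 1 j) (m:ℝ) hmr0 hmW
    calc |(bigP L b w I).eval (m:ℝ)|
        = |(gPoly b).eval (m:ℝ)| * ∏ i ∈ Finset.range I,
            |(qPoly (kb L b w i) (delb b w i) (2/(w:ℝ))).eval (m:ℝ)| := by
          rw [bigP_eval, abs_mul, Finset.abs_prod]
      _ ≤ ((m:ℝ)^b / (b.factorial:ℝ)) * ρ^(j+1) := by
          apply mul_le_mul hg hprod (Finset.prod_nonneg (fun i _ => abs_nonneg _)) (by positivity)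
      _ ≤ Real.exp (-L) := hfinal

lemma bigP_degree_real (L : ℝ) (hL : 2 ≤ L) {b w : ℕ} (hb : 1 ≤ b) (hLb : L ≤ b)
    (hbL1 : (b:ℝ) ≤ L + 1) (hbw : b ≤ w) :
    ((bigP L b w (Nat.log 2 w + 1)).natDegree : ℝ) ≤ 25 * Real.sqrt ((w:ℝ) * L) := by
  have hw1 : 1 ≤ w := le_trans hb hbw
  have hw0 : (0:ℝ) < w := by exact_mod_cast hw1
  have hL0 : (0:ℝ) < L := by linarith
  have hb0 : (0:ℝ) < (b:ℝ) := by exact_mod_cast hb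
  have hbr : (L:ℝ) ≤ (b:ℝ) := hLb
  have hbwr : (b:ℝ) ≤ (w:ℝ) := by exact_mod_cast hbw
  have hLw : L ≤ (w:ℝ) := le_trans hbr hbwr
  set S := Real.sqrt ((w:ℝ) * L) with hSdef
  have hS0 : 0 ≤ S := Real.sqrt_nonneg _
  have hLS : L ≤ S := by
    have h1 : L*L ≤ (w:ℝ)*L := by nlinarith
    have h2 := Real.sqrt_le_sqrt h1
    rwa [Real.sqrt_mul_self hL0.le] at h2
  set I := Nat.log 2 w + 1 with hIdef
  set r := Real.sqrt 2⁻¹ with hrdef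
  have hr0 : 0 ≤ r := Real.sqrt_nonneg _
  have hrsq : r^2 = 2⁻¹ := Real.sq_sqrt (by norm_num)
  have hr71 : r ≤ 0.71 := by nlinarith
  -- geometric sum bound
  have hsum0 : (0:ℝ) ≤ ∑ i ∈ Finset.range I, r^i :=
    Finset.sum_nonneg fun i _ => pow_nonneg hr0 i
  have hgeom : ∑ i ∈ Finset.range I, r^i ≤ 3.5 := by
    have hgs := geom_sum_mul r I
    have hpow : (0:ℝ) ≤ r^I := pow_nonneg hr0 I
    nlinarith [mul_nonneg hsum0 (by linarith : (0:ℝ) ≤ 1 - r - 0.29)]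
  -- each kb term
  have hterm : ∀ i, (kb L b w i : ℝ) ≤ (L + 3*(b:ℝ)) * Real.sqrt ((w:ℝ)/(b:ℝ)) * r^i + 1 := by
    intro i
    have hWpos : 0 < Wb b i := Wb_pos hb i
    have hW0 : (0:ℝ) < (Wb b i : ℝ) := by exact_mod_cast hWpos
    have harg : (0:ℝ) ≤ (L + 3*(b:ℝ)) * Real.sqrt ((w:ℝ)/(Wb b i : ℝ)) := by positivity
    have hceil : (kb L b w i : ℝ) < (L + 3*(b:ℝ)) * Real.sqrt ((w:ℝ)/(Wb b i : ℝ)) + 1 := by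
      rw [kb]
      exact Nat.ceil_lt_add_one harg
    have hsplit : Real.sqrt ((w:ℝ)/(Wb b i : ℝ)) = Real.sqrt ((w:ℝ)/(b:ℝ)) * r^i := by
      have e : (w:ℝ)/((Wb b i : ℕ):ℝ) = ((w:ℝ)/(b:ℝ)) * ((2:ℝ)⁻¹)^i := by
        rw [Wb_cast, inv_pow]
        field_simp
      rw [e, Real.sqrt_mul (by positivity), sqrt_pow_half, hrdef]
    rw [hsplit] at hceil
    linarith [hceil]
  -- sum of kb
  have hsum : ∑ i ∈ Finset.range I, (kb L b w i : ℝ)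
      ≤ (L + 3*(b:ℝ)) * Real.sqrt ((w:ℝ)/(b:ℝ)) * 3.5 + I := by
    calc ∑ i ∈ Finset.range I, (kb L b w i : ℝ)
        ≤ ∑ i ∈ Finset.range I, ((L + 3*(b:ℝ)) * Real.sqrt ((w:ℝ)/(b:ℝ)) * r^i + 1) :=
          Finset.sum_le_sum fun i _ => hterm i
      _ = (L + 3*(b:ℝ)) * Real.sqrt ((w:ℝ)/(b:ℝ)) * (∑ i ∈ Finset.range I, r^i) + I := by
          rw [Finset.sum_add_distrib, ← Finset.mul_sum]
          simp
      _ ≤ (L + 3*(b:ℝ)) * Real.sqrt ((w:ℝ)/(b:ℝ)) * 3.5 + I := by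
          have hnn : (0:ℝ) ≤ (L + 3*(b:ℝ)) * Real.sqrt ((w:ℝ)/(b:ℝ)) := by positivity
          have := mul_le_mul_of_nonneg_left hgeom hnn
          linarith
  -- the sqrt(w/L) identity
  have hkey : L * Real.sqrt ((w:ℝ)/L) = S := by
    have e : (w:ℝ)/L = ((w:ℝ)*L)/(L^2) := by field_simp
    rw [e, Real.sqrt_div' _ (by positivity : (0:ℝ) ≤ L^2), Real.sqrt_sq hL0.le, hSdef]
    field_simp
  have hmid : (L + 3*(b:ℝ)) * Real.sqrt ((w:ℝ)/(b:ℝ)) ≤ 5.5 * S := by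
    have h1 : L + 3*(b:ℝ) ≤ 5.5 * L := by linarith
    have h2 : Real.sqrt ((w:ℝ)/(b:ℝ)) ≤ Real.sqrt ((w:ℝ)/L) := by
      apply Real.sqrt_le_sqrt
      exact div_le_div_of_nonneg_left hw0.le hL0 hbr
    calc (L + 3*(b:ℝ)) * Real.sqrt ((w:ℝ)/(b:ℝ)) ≤ (5.5 * L) * Real.sqrt ((w:ℝ)/L) := by
          apply mul_le_mul h1 h2 (Real.sqrt_nonneg _) (by positivity)
      _ = 5.5 * (L * Real.sqrt ((w:ℝ)/L)) := by ring
      _ = 5.5 * S := by rw [hkey]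
  -- bound on I
  have hI : (I:ℝ) ≤ 2.1 * S := by
    have hwne : w ≠ 0 := by omega
    have hlogp : (2:ℝ)^(Nat.log 2 w) ≤ (w:ℝ) := by exact_mod_cast Nat.pow_log_le_self 2 hwne
    have hlog1 : (Nat.log 2 w : ℝ) * Real.log 2 ≤ Real.log w := by
      rw [← Real.log_pow]
      exact Real.log_le_log (by positivity) hlogp
    have hsw0 : (0:ℝ) < Real.sqrt w := Real.sqrt_pos.mpr hw0
    have hlog2 : Real.log w ≤ 2 * (Real.sqrt w - 1) := by
      have e : Real.log (Real.sqrt w) = Real.log w / 2 := Real.log_sqrt hw0.le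
      have h := Real.log_le_sub_one_of_pos hsw0
      linarith
    have hl2 : (0.6931471803:ℝ) < Real.log 2 := Real.log_two_gt_d9
    have hlogw : (Nat.log 2 w : ℝ) ≤ 2.9 * (Real.sqrt w - 1) := by
      nlinarith [(by positivity : (0:ℝ) ≤ ((Nat.log 2 w : ℕ):ℝ))]
    have hswS : Real.sqrt (w:ℝ) ≤ 0.71 * S := by
      have h1 : (w:ℝ) ≤ (w:ℝ)*L*2⁻¹ := by nlinarith
      calc Real.sqrt (w:ℝ) ≤ Real.sqrt ((w:ℝ)*L*2⁻¹) := Real.sqrt_le_sqrt h1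
        _ = S * r := by rw [Real.sqrt_mul (by positivity), hSdef, hrdef]
        _ ≤ S * 0.71 := by apply mul_le_mul_of_nonneg_left hr71 hS0
        _ = 0.71 * S := by ring
    have : (I:ℝ) = (Nat.log 2 w : ℝ) + 1 := by rw [hIdef]; push_cast; ring
    rw [this]
    nlinarith
  -- conclude
  have hdeg := bigP_natDegree L b w I
  have hdegr : ((bigP L b w I).natDegree : ℝ) ≤ (b:ℝ) + ∑ i ∈ Finset.range I, (kb L b w i : ℝ) := by
    have : ((b + ∑ i ∈ Finset.range I, kb L b w i : ℕ):ℝ)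
        = (b:ℝ) + ∑ i ∈ Finset.range I, (kb L b w i : ℝ) := by push_cast; ring
    rw [← this]
    exact_mod_cast hdeg
  have hbS : (b:ℝ) ≤ 1.5 * S := by
    have : (b:ℝ) ≤ 1.5 * L := by linarith
    linarith [hLS]
  calc ((bigP L b w I).natDegree : ℝ)
      ≤ (b:ℝ) + ∑ i ∈ Finset.range I, (kb L b w i : ℝ) := hdegr
    _ ≤ (b:ℝ) + ((L + 3*(b:ℝ)) * Real.sqrt ((w:ℝ)/(b:ℝ)) * 3.5 + I) := by linarith [hsum]
    _ ≤ 1.5*S + (5.5*S*3.5 + 2.1*S) := by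
        have h1 : (L + 3*(b:ℝ)) * Real.sqrt ((w:ℝ)/(b:ℝ)) * 3.5 ≤ 5.5*S*3.5 := by
          nlinarith [hmid]
        linarith
    _ ≤ 25 * S := by linarith

lemma exists_univariate (w : ℕ) (hw : 1 ≤ w) (L : ℝ) (hL : 2 ≤ L) :
    ∃ p : Polynomial ℝ,
      ((p.natDegree : ℝ) ≤ 25 * Real.sqrt ((w:ℝ) * L)) ∧
      p.eval 0 = 1 ∧
      ∀ m : ℕ, 1 ≤ m → m ≤ w → |p.eval (m:ℝ)| ≤ Real.exp (-L) := by
  have hL0 : (0:ℝ) < L := by linarith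
  have hw0 : (0:ℝ) < (w:ℝ) := by exact_mod_cast hw
  set b := ⌈L⌉₊ with hbdef
  have hLb : L ≤ (b:ℝ) := Nat.le_ceil L
  have hb1 : 1 ≤ b := by
    have : (1:ℝ) ≤ (b:ℝ) := by linarith
    exact_mod_cast this
  have hbL1 : (b:ℝ) ≤ L + 1 := (Nat.ceil_lt_add_one hL0.le).le
  rcases lt_or_ge w b with hbw | hbw
  · -- small case : exact vanishing polynomial of degree w
    refine ⟨gPoly w, ?_, gPoly_eval_zero w, ?_⟩
    · have hwL : (w:ℝ) ≤ L := by
        have h1 : w + 1 ≤ b := hbw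
        have h2 : ((w:ℝ) + 1) ≤ (b:ℝ) := by exact_mod_cast h1
        linarith
      have h3 : (w:ℝ) ≤ Real.sqrt ((w:ℝ)*L) := by
        have h4 : (w:ℝ)*(w:ℝ) ≤ (w:ℝ)*L := by nlinarith
        have h5 := Real.sqrt_le_sqrt h4
        rwa [Real.sqrt_mul_self hw0.le] at h5
      have h6 : ((gPoly w).natDegree : ℝ) ≤ (w:ℝ) := by
        exact_mod_cast gPoly_natDegree w
      have h7 : (0:ℝ) ≤ Real.sqrt ((w:ℝ)*L) := Real.sqrt_nonneg _
      linarith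
    · intro m hm1 hmw
      rw [gPoly_eval_eq_zero hm1 hmw, abs_zero]
      exact (Real.exp_pos _).le
  · -- main case
    refine ⟨bigP L b w (Nat.log 2 w + 1), ?_, bigP_eval_zero L b w _, ?_⟩
    · exact bigP_degree_real L hL hb1 hLb hbL1 hbw
    · intro m hm1 hmw
      exact bigP_abs_le L hL hb1 hbw hm1 hmw

noncomputable def linForm {d : ℕ} (Z : Finset (Fin d)) : MvPolynomial (Fin d) ℝ :=
  ∑ i ∈ Z, MvPolynomial.X i

lemma linForm_totalDegree {d : ℕ} (Z : Finset (Fin d)) : (linForm Z).totalDegree ≤ 1 := by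
  refine (MvPolynomial.totalDegree_finset_sum _ _).trans ?_
  apply Finset.sup_le
  intro i _
  rw [MvPolynomial.totalDegree_X]

lemma linForm_eval {d : ℕ} (Z : Finset (Fin d)) (x : Fin d → ℝ) :
    MvPolynomial.eval x (linForm Z) = ∑ i ∈ Z, x i := by
  rw [linForm, map_sum]
  exact Finset.sum_congr rfl fun i _ => MvPolynomial.eval_X i

lemma comp_totalDegree {d : ℕ} (p : Polynomial ℝ) (f : MvPolynomial (Fin d) ℝ)
    (hf : f.totalDegree ≤ 1) :
    (Polynomial.eval₂ MvPolynomial.C f p).totalDegree ≤ p.natDegree := by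
  rw [Polynomial.eval₂_eq_sum_range]
  refine (MvPolynomial.totalDegree_finset_sum _ _).trans ?_
  apply Finset.sup_le
  intro i hi
  refine (MvPolynomial.totalDegree_mul _ _).trans ?_
  rw [MvPolynomial.totalDegree_C]
  have h1 : (f^i).totalDegree ≤ i * f.totalDegree := MvPolynomial.totalDegree_pow f i
  have h2 : i * f.totalDegree ≤ i * 1 := Nat.mul_le_mul_left i hf
  have h3 : i ≤ p.natDegree := by
    have := Finset.mem_range.mp hi; omega
  omega

lemma comp_eval {d : ℕ} (p : Polynomial ℝ) (f : MvPolynomial (Fin d) ℝ) (x : Fin d → ℝ) :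
    MvPolynomial.eval x (Polynomial.eval₂ MvPolynomial.C f p)
      = p.eval (MvPolynomial.eval x f) := by
  rw [Polynomial.hom_eval₂]
  have h : (MvPolynomial.eval x).comp (MvPolynomial.C (σ := Fin d) (R := ℝ)) = RingHom.id ℝ := by
    ext r
    simp
  rw [h]
  rfl

def Zset {d n : ℕ} (D : Fin n → Fin d → Bool) (u : Fin n) : Finset (Fin d) :=
  Finset.univ.filter fun i => D u i = false

def mu {d n : ℕ} (D : Fin n → Fin d → Bool) (u : Fin n) (q : Fin d → Bool) : ℕ :=
  ((Zset D u).filter fun i => q i = true).card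

def cntD {d n : ℕ} (D : Fin n → Fin d → Bool) (q : Fin d → Bool) : ℕ :=
  (Finset.univ.filter fun j : Fin n => ∀ i, q i = true → D j i = true).card

lemma mu_eval {d n : ℕ} (D : Fin n → Fin d → Bool) (u : Fin n) (q : Fin d → Bool) :
    MvPolynomial.eval (fun i => if q i then (1:ℝ) else 0) (linForm (Zset D u))
      = (mu D u q : ℝ) := by
  rw [linForm_eval, mu]
  rw [← Finset.sum_boole]

lemma mu_zero_iff {d n : ℕ} (D : Fin n → Fin d → Bool) (u : Fin n) (q : Fin d → Bool) :
    mu D u q = 0 ↔ (∀ i, q i = true → D u i = true) := by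
  rw [mu, Finset.card_eq_zero, Finset.filter_eq_empty_iff]
  constructor
  · intro h i hq
    by_contra hDi
    have hDi' : D u i = false := by
      cases hDu : D u i
      · rfl
      · exact absurd hDu hDi
    have hiZ : i ∈ Zset D u := by
      rw [Zset, Finset.mem_filter]
      exact ⟨Finset.mem_univ i, hDi'⟩
    exact (h hiZ) hq
  · intro h i hiZ
    rw [Zset, Finset.mem_filter] at hiZ
    intro hq
    have := h i hq
    rw [this] at hiZ
    exact absurd hiZ.2 (by simp)

lemma mu_le_w {d n w : ℕ} (D : Fin n → Fin d → Bool)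
    (hD : ∀ j : Fin n, (Finset.univ.filter fun i => D j i = false).card ≤ w)
    (u : Fin n) (q : Fin d → Bool) : mu D u q ≤ w :=
  le_trans (Finset.card_le_card (Finset.filter_subset _ _)) (hD u)

lemma sum_eval_near_count {d n w : ℕ} (D : Fin n → Fin d → Bool)
    (hD : ∀ j : Fin n, (Finset.univ.filter fun i => D j i = false).card ≤ w)
    (q : Fin d → Bool) (p : Polynomial ℝ) (ε : ℝ) (hε : 0 ≤ ε) (hp0 : p.eval 0 = 1)
    (hpbd : ∀ m : ℕ, 1 ≤ m → m ≤ w → |p.eval (m:ℝ)| ≤ ε) :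
    |(∑ u : Fin n, p.eval ((mu D u q : ℕ):ℝ)) - (cntD D q : ℝ)| ≤ n * ε := by
  classical
  set P : Fin n → Prop := fun u => ∀ i, q i = true → D u i = true with hPdef
  have hsplit := Finset.sum_filter_add_sum_filter_not Finset.univ P
    (fun u => p.eval ((mu D u q : ℕ):ℝ))
  have h1 : ∑ u ∈ Finset.univ.filter P, p.eval ((mu D u q : ℕ):ℝ) = (cntD D q : ℝ) := by
    have e : ∀ u ∈ Finset.univ.filter P, p.eval ((mu D u q : ℕ):ℝ) = 1 := by
      intro u hu
      have hmu : mu D u q = 0 := (mu_zero_iff D u q).mpr (Finset.mem_filter.mp hu).2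
      rw [hmu]
      exact_mod_cast hp0
    rw [Finset.sum_congr rfl e, Finset.sum_const, nsmul_eq_mul, mul_one, cntD]
  have h2 : |∑ u ∈ Finset.univ.filter (fun u => ¬ P u), p.eval ((mu D u q : ℕ):ℝ)| ≤ n * ε := by
    refine (Finset.abs_sum_le_sum_abs _ _).trans ?_
    have hb : ∀ u ∈ Finset.univ.filter (fun u => ¬ P u), |p.eval ((mu D u q : ℕ):ℝ)| ≤ ε := by
      intro u hu
      have hu' : ¬ P u := (Finset.mem_filter.mp hu).2
      have hmu : mu D u q ≠ 0 := fun h => hu' ((mu_zero_iff D u q).mp h)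
      exact hpbd (mu D u q) (Nat.one_le_iff_ne_zero.mpr hmu) (mu_le_w D hD u q)
    refine (Finset.sum_le_card_nsmul _ _ ε hb).trans ?_
    have hcard : (Finset.univ.filter (fun u : Fin n => ¬ P u)).card ≤ n := by
      refine (Finset.card_filter_le _ _).trans ?_
      simp
    calc (Finset.univ.filter (fun u : Fin n => ¬ P u)).card • ε
        = ((Finset.univ.filter (fun u : Fin n => ¬ P u)).card : ℝ) * ε := by
          rw [nsmul_eq_mul]
      _ ≤ n * ε := by
          apply mul_le_mul_of_nonneg_right _ hε
          exact_mod_cast hcard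
  have heq : (∑ u : Fin n, p.eval ((mu D u q : ℕ):ℝ)) - (cntD D q : ℝ)
      = ∑ u ∈ Finset.univ.filter (fun u => ¬ P u), p.eval ((mu D u q : ℕ):ℝ) := by
    rw [← hsplit, h1]
    ring
  rw [heq]
  exact h2

end ConjPTF

open scoped BigOperators

/-- The fraction of items in the database `D` satisfied by the monotone conjunction query `q`. -/
noncomputable def conjFrac {d n : ℕ} (D : Fin n → Fin d → Bool) (q : Fin d → Bool) : ℝ :=
  ((Finset.univ.filter fun j : Fin n => ∀ i, q i = true → D j i = true).card : ℝ) / (n : ℝ)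

/-- If every item of the database has width at most `w` (at most `w` zero coordinates), then the
thresholded conjunction counting function has a PTF of degree `O(√(w log n))` over all of
`{0,1}^d`. -/
theorem conj_threshold_ptf_width :
    ∃ C : ℝ, 0 < C ∧
      ∀ (d w n : ℕ), 0 < n →
        ∀ (t : ℝ), t ∈ Set.Icc (0 : ℝ) 1 →
          ∀ (D : Fin n → Fin d → Bool),
            (∀ j : Fin n, (Finset.univ.filter fun i => D j i = false).card ≤ w) →
            ∃ A : MvPolynomial (Fin d) ℝ,
              (A.totalDegree : ℝ) ≤ C * (Real.sqrt ((w : ℝ) * Real.log n) + 1) ∧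
              ∀ q : Fin d → Bool,
                (0 ≤ MvPolynomial.eval (fun i => if q i then (1 : ℝ) else 0) A ↔
                  t ≤ conjFrac D q) := by
  classical
  refine ⟨200, by norm_num, ?_⟩
  intro d w n hn t ht D hD
  have hn0 : (0:ℝ) < n := by exact_mod_cast hn
  have hfrac : ∀ q, conjFrac D q = ((ConjPTF.cntD D q : ℕ) : ℝ) / n := fun q => rfl
  have hsqnn : (0:ℝ) ≤ Real.sqrt ((w:ℝ) * Real.log n) := Real.sqrt_nonneg _
  by_cases ht0 : t ≤ 0
  · refine ⟨MvPolynomial.C 1, ?_, ?_⟩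
    · rw [MvPolynomial.totalDegree_C]
      push_cast
      nlinarith
    · intro q
      have h1 : (0:ℝ) ≤ MvPolynomial.eval (fun i => if q i then (1:ℝ) else 0)
          (MvPolynomial.C (1:ℝ)) := by
        rw [MvPolynomial.eval_C]; norm_num
      have h2 : t ≤ conjFrac D q := by
        rw [hfrac]
        have h3 : (0:ℝ) ≤ (ConjPTF.cntD D q : ℝ)/n := by positivity
        linarith
      exact iff_of_true h1 h2
  push_neg at ht0
  have hcnt_iff : ∀ q, (t ≤ conjFrac D q ↔ (⌈t * (n:ℝ)⌉₊ ≤ ConjPTF.cntD D q)) := by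
    intro q
    rw [hfrac, le_div_iff₀ hn0]
    exact (Nat.ceil_le).symm
  rcases Nat.lt_or_ge n 2 with hn2 | hn2
  · -- n = 1
    have hn1 : n = 1 := by omega
    subst hn1
    refine ⟨MvPolynomial.C (1/2 : ℝ) - ConjPTF.linForm (ConjPTF.Zset D 0), ?_, ?_⟩
    · have hdeg : (MvPolynomial.C (1/2 : ℝ) - ConjPTF.linForm (ConjPTF.Zset D 0)).totalDegree
          ≤ 1 := by
        rw [sub_eq_add_neg]
        refine (MvPolynomial.totalDegree_add _ _).trans ?_
        rw [MvPolynomial.totalDegree_C, MvPolynomial.totalDegree_neg]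
        exact max_le (Nat.zero_le _) (ConjPTF.linForm_totalDegree _)
      have h1 : ((MvPolynomial.C (1/2 : ℝ) - ConjPTF.linForm (ConjPTF.Zset D 0)).totalDegree : ℝ)
          ≤ 1 := by exact_mod_cast hdeg
      rw [Nat.cast_one, Real.log_one, mul_zero, Real.sqrt_zero]
      linarith
    · intro q
      have heval : MvPolynomial.eval (fun i => if q i then (1:ℝ) else 0)
          (MvPolynomial.C (1/2 : ℝ) - ConjPTF.linForm (ConjPTF.Zset D 0))
          = 1/2 - (ConjPTF.mu D 0 q : ℝ) := by
        rw [map_sub, MvPolynomial.eval_C, ConjPTF.mu_eval]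
      have hc1 : ⌈t * ((1:ℕ):ℝ)⌉₊ = 1 := by
        rw [Nat.cast_one, mul_one]
        refine le_antisymm ?_ ?_
        · exact Nat.ceil_le.mpr (by exact_mod_cast ht.2)
        · rw [Nat.one_le_ceil_iff]
          exact ht0
      rw [heval, hcnt_iff q, hc1]
      constructor
      · intro h0
        have hmu : ConjPTF.mu D 0 q = 0 := by
          by_contra hne
          have h1 : 1 ≤ ConjPTF.mu D 0 q := Nat.one_le_iff_ne_zero.mpr hne
          have h2 : (1:ℝ) ≤ (ConjPTF.mu D 0 q : ℝ) := by exact_mod_cast h1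
          linarith
        have hP := (ConjPTF.mu_zero_iff D 0 q).mp hmu
        have h0mem : (0 : Fin 1) ∈ Finset.univ.filter
            (fun j : Fin 1 => ∀ i, q i = true → D j i = true) :=
          Finset.mem_filter.mpr ⟨Finset.mem_univ _, hP⟩
        have hpos := Finset.card_pos.mpr ⟨(0 : Fin 1), h0mem⟩
        rw [ConjPTF.cntD]
        omega
      · intro hc
        have hne : (Finset.univ.filter
            (fun j : Fin 1 => ∀ i, q i = true → D j i = true)).Nonempty := by
          rw [ConjPTF.cntD] at hc
          exact Finset.card_pos.mp (by omega)
        obtain ⟨u, hu⟩ := hne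
        have hu0 : u = 0 := Fin.fin_one_eq_zero u
        have hP : ∀ i, q i = true → D 0 i = true := by
          have h := (Finset.mem_filter.mp hu).2
          rwa [hu0] at h
        have hmu : ConjPTF.mu D 0 q = 0 := (ConjPTF.mu_zero_iff D 0 q).mpr hP
        rw [hmu]
        norm_num
  · -- n ≥ 2
    rcases Nat.eq_zero_or_pos w with hw0 | hw1
    · -- w = 0 : all items are all-ones
      subst hw0
      refine ⟨MvPolynomial.C 1, ?_, ?_⟩
      · rw [MvPolynomial.totalDegree_C]
        push_cast
        positivity
      · intro q
        have hall : ∀ u : Fin n, ∀ i, D u i = true := by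
          intro u i
          have h := hD u
          have hempty : (Finset.univ.filter fun i => D u i = false) = ∅ :=
            Finset.card_eq_zero.mp (Nat.le_zero.mp h)
          by_contra hne
          have hfalse : D u i = false := by
            cases hDu : D u i
            · rfl
            · exact absurd hDu hne
          have hmem : i ∈ Finset.univ.filter fun i => D u i = false :=
            Finset.mem_filter.mpr ⟨Finset.mem_univ _, hfalse⟩
          rw [hempty] at hmem
          exact absurd hmem (Finset.notMem_empty i)
        have hcnt : ConjPTF.cntD D q = n := by
          rw [ConjPTF.cntD]
          have heq : Finset.univ.filter (fun j : Fin n => ∀ i, q i = true → D j i = true)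
              = Finset.univ := by
            apply Finset.filter_true_of_mem
            intro j _
            intro i _
            exact hall j i
          rw [heq, Finset.card_univ, Fintype.card_fin]
        have h2 : t ≤ conjFrac D q := by
          rw [hfrac, hcnt, div_self (ne_of_gt hn0)]
          exact ht.2
        have h1 : (0:ℝ) ≤ MvPolynomial.eval (fun i => if q i then (1:ℝ) else 0)
            (MvPolynomial.C (1:ℝ)) := by
          rw [MvPolynomial.eval_C]; norm_num
        exact iff_of_true h1 h2
    · -- main case : w ≥ 1, n ≥ 2
      have h12n : (0:ℝ) < 12 * n := by positivity
      have hL2 : 2 ≤ Real.log (12 * n) := by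
        rw [Real.le_log_iff_exp_le h12n]
        have h1 : Real.exp 2 = Real.exp 1 * Real.exp 1 := by
          rw [← Real.exp_add]; norm_num
        have h2 := Real.exp_one_lt_d9
        have hn2' : (2:ℝ) ≤ n := by exact_mod_cast hn2
        nlinarith [Real.exp_pos 1]
      obtain ⟨p, hpdeg, hp0, hpbd⟩ :=
        ConjPTF.exists_univariate w hw1 (Real.log (12 * n)) hL2
      refine ⟨(∑ u : Fin n,
          Polynomial.eval₂ MvPolynomial.C (ConjPTF.linForm (ConjPTF.Zset D u)) p)
        + MvPolynomial.C (1/2 - ((⌈t * (n:ℝ)⌉₊ : ℕ):ℝ)), ?_, ?_⟩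
      · -- degree bound
        have hAdeg : ((∑ u : Fin n,
            Polynomial.eval₂ MvPolynomial.C (ConjPTF.linForm (ConjPTF.Zset D u)) p)
            + MvPolynomial.C (1/2 - ((⌈t * (n:ℝ)⌉₊ : ℕ):ℝ))).totalDegree ≤ p.natDegree := by
          refine (MvPolynomial.totalDegree_add _ _).trans ?_
          have hsum : (∑ u : Fin n,
              Polynomial.eval₂ MvPolynomial.C (ConjPTF.linForm (ConjPTF.Zset D u)) p).totalDegree
              ≤ p.natDegree := by
            refine (MvPolynomial.totalDegree_finset_sum _ _).trans ?_
            apply Finset.sup_le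
            intro u _
            exact ConjPTF.comp_totalDegree p _ (ConjPTF.linForm_totalDegree _)
          rw [MvPolynomial.totalDegree_C]
          exact max_le hsum (Nat.zero_le _)
        have hlogn : Real.log 2 ≤ Real.log n :=
          Real.log_le_log (by norm_num) (by exact_mod_cast hn2)
        have hlog2 := Real.log_two_gt_d9
        have hlognn : (0:ℝ) ≤ Real.log n := by linarith
        have hL11 : Real.log (12 * n) ≤ 11 + Real.log n := by
          rw [Real.log_mul (by norm_num) (by positivity)]
          have h1 : Real.log 12 ≤ 11 := by
            have := Real.log_le_sub_one_of_pos (by norm_num : (0:ℝ) < 12); linarith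
          linarith
        have hX2 : Real.sqrt ((w:ℝ) * Real.log n)^2 = (w:ℝ) * Real.log n :=
          Real.sq_sqrt (by positivity)
        have hw0r : (0:ℝ) < (w:ℝ) := by exact_mod_cast hw1
        have hY : Real.sqrt ((w:ℝ) * Real.log (12 * n))
            ≤ Real.sqrt (17 * ((w:ℝ) * Real.log n)) := by
          apply Real.sqrt_le_sqrt
          nlinarith
        have h17 : Real.sqrt (17 * ((w:ℝ) * Real.log n))
            = Real.sqrt 17 * Real.sqrt ((w:ℝ) * Real.log n) :=
          Real.sqrt_mul (by norm_num) _
        have hs17 : Real.sqrt 17 ≤ 4.2 := by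
          nlinarith [Real.sq_sqrt (by norm_num : (0:ℝ) ≤ 17), Real.sqrt_nonneg (17:ℝ)]
        have h3 : Real.sqrt ((w:ℝ) * Real.log (12 * n))
            ≤ 4.2 * Real.sqrt ((w:ℝ) * Real.log n) := by
          rw [h17] at hY
          nlinarith [hsqnn]
        have hc1 : (((∑ u : Fin n,
            Polynomial.eval₂ MvPolynomial.C (ConjPTF.linForm (ConjPTF.Zset D u)) p)
            + MvPolynomial.C (1/2 - ((⌈t * (n:ℝ)⌉₊ : ℕ):ℝ))).totalDegree : ℝ)
            ≤ (p.natDegree : ℝ) := by exact_mod_cast hAdeg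
        linarith [hpdeg]
      · intro q
        have heval : MvPolynomial.eval (fun i => if q i then (1:ℝ) else 0)
            ((∑ u : Fin n,
              Polynomial.eval₂ MvPolynomial.C (ConjPTF.linForm (ConjPTF.Zset D u)) p)
            + MvPolynomial.C (1/2 - ((⌈t * (n:ℝ)⌉₊ : ℕ):ℝ)))
            = (∑ u : Fin n, p.eval ((ConjPTF.mu D u q : ℕ):ℝ))
              + (1/2 - ((⌈t * (n:ℝ)⌉₊ : ℕ):ℝ)) := by
          rw [map_add, MvPolynomial.eval_C, map_sum]
          congr 1
          refine Finset.sum_congr rfl fun u _ => ?_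
          rw [ConjPTF.comp_eval, ConjPTF.mu_eval]
        have hnear := ConjPTF.sum_eval_near_count D hD q p (Real.exp (-(Real.log (12*n))))
          (Real.exp_pos _).le hp0 hpbd
        have hepsn : (n:ℝ) * Real.exp (-(Real.log (12*n))) = 1/12 := by
          rw [Real.exp_neg, Real.exp_log h12n]
          have hnne : (n:ℝ) ≠ 0 := ne_of_gt hn0
          field_simp
        rw [hepsn] at hnear
        have habs := abs_le.mp hnear
        rw [heval, hcnt_iff q]
        constructor
        · intro h0
          by_contra hcon
          push_neg at hcon
          have hcc : ConjPTF.cntD D q + 1 ≤ ⌈t * (n:ℝ)⌉₊ := hcon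
          have hccr : (ConjPTF.cntD D q : ℝ) + 1 ≤ ((⌈t * (n:ℝ)⌉₊ : ℕ):ℝ) := by
            exact_mod_cast hcc
          linarith [habs.2]
        · intro hc
          have hccr : ((⌈t * (n:ℝ)⌉₊ : ℕ):ℝ) ≤ (ConjPTF.cntD D q : ℝ) := by
            exact_mod_cast hc
          linarith [habs.1]
end
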